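/- With F, m ≡ 1,2 mod 4, K, ε, A, B, C, C₂ as above: if (x,y) = (x₁+x₂i√m, y₁+y₂i√m) ∈ ℤ[i√m]² satisfies |F(x,y)| ≤ K, |y| > C₂, and y₁ = 0, then x₁ = 0 and |F(x₂,y₂)| ≤ K/(√m)^n. -/

import Mathlib

open Finset

/-!
Since `y₁ = 0`, the number `y` is purely imaginary, so every factor `x - α j * y` of `F(x, y)` has
real part `x₁`. If `x₁ ≠ 0`, all factors therefore have norm at least `1`. As their product is at
most `K`, one factor `x - α i * y` has norm at most `K ^ (1/n) ≤ ε A ‖y‖`, and then by the triangle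
inequality every other factor has norm at least `(1 - ε) |α j - α i| ‖y‖`. Hence
`((1 - ε) ‖y‖) ^ (n - 1) B ≤ K`, i.e. `‖y‖ ^ (n - 1) ≤ C`, which contradicts `‖y‖ > C ^ (1/(n-2)) ≥ 1`.
So `x₁ = 0`, every factor equals `(x₂ - α j y₂) i √m`, and the bound follows by taking norms.
-/

theorem exists_le_rpow_of_prod_le {ι : Type*} [Fintype ι] [Nonempty ι] {f : ι → ℝ} {K : ℝ}
    (hK : 0 < K) (h : ∏ i, f i ≤ K) : ∃ i, f i ≤ K ^ ((1 : ℝ) / Fintype.card ι) := by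
  by_contra! hlt
  have hK_eq : ∏ _i : ι, K ^ ((1 : ℝ) / Fintype.card ι) = K := by
    rw [prod_const, card_univ, ← Real.rpow_natCast, ← Real.rpow_mul hK.le,
      one_div_mul_cancel (by exact_mod_cast Fintype.card_ne_zero), Real.rpow_one]
  have := prod_lt_prod_of_nonempty (fun _ _ => by positivity) (fun i _ => hlt i) univ_nonempty
  linarith

theorem one_sub_mul_le_norm_sub_mul {𝕜 : Type*} [NormedDivisionRing 𝕜] {a b x y : 𝕜} {ε : ℝ}
    (h : ‖x - a * y‖ ≤ ε * ‖a - b‖ * ‖y‖) : (1 - ε) * ‖a - b‖ * ‖y‖ ≤ ‖x - b * y‖ := by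
  have : ‖a - b‖ * ‖y‖ ≤ ‖x - b * y‖ + ‖x - a * y‖ := by
    rw [← norm_mul, show (a - b) * y = (x - b * y) - (x - a * y) by noncomm_ring]
    exact norm_sub_le _ _
  linarith

section FactorBounds

variable {ι : Type*} [Fintype ι] [DecidableEq ι] {α : ι → ℝ} {x y : ℂ} {ε A : ℝ}

theorem pow_mul_prod_erase_le_prod_erase_norm (hε0 : 0 ≤ ε) (hε1 : ε ≤ 1) {i : ι}
    (hi : ‖x - α i * y‖ ≤ ε * A * ‖y‖) (hA : ∀ j, j ≠ i → A ≤ |α i - α j|) :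
    ((1 - ε) * ‖y‖) ^ (Fintype.card ι - 1) * ∏ j ∈ univ.erase i, |α j - α i| ≤
      ∏ j ∈ univ.erase i, ‖x - α j * y‖ := by
  have hfactor : ∀ j ∈ univ.erase i, (1 - ε) * ‖y‖ * |α j - α i| ≤ ‖x - α j * y‖ := by
    intro j hj
    have hsep : ‖(α i : ℂ) - α j‖ = |α i - α j| := by
      rw [← Complex.ofReal_sub, Complex.norm_real, Real.norm_eq_abs]
    have hclose : ‖x - α i * y‖ ≤ ε * ‖(α i : ℂ) - α j‖ * ‖y‖ := by
      rw [hsep]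
      exact hi.trans (by gcongr; exact hA j (ne_of_mem_erase hj))
    have := one_sub_mul_le_norm_sub_mul hclose
    rw [hsep, abs_sub_comm] at this
    linarith
  calc ((1 - ε) * ‖y‖) ^ (Fintype.card ι - 1) * ∏ j ∈ univ.erase i, |α j - α i|
      = ∏ j ∈ univ.erase i, (1 - ε) * ‖y‖ * |α j - α i| := by
        rw [prod_mul_distrib, prod_const, card_erase_of_mem (mem_univ i), card_univ]
    _ ≤ ∏ j ∈ univ.erase i, ‖x - α j * y‖ :=
        prod_le_prod (fun j _ => by have := sub_nonneg.2 hε1; positivity) hfactor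

theorem pow_card_pred_mul_le_of_norm_prod_le [Nonempty ι] {K B : ℝ} (hK : 0 < K)
    (hε0 : 0 ≤ ε) (hε1 : ε ≤ 1) (hA : ∀ i j, i ≠ j → A ≤ |α i - α j|)
    (hB : ∀ i, B ≤ ∏ j ∈ univ.erase i, |α j - α i|) (hF : ‖∏ j, (x - α j * y)‖ ≤ K)
    (hy : K ^ ((1 : ℝ) / Fintype.card ι) ≤ ε * A * ‖y‖) (hone : ∀ j, 1 ≤ ‖x - α j * y‖) :
    ((1 - ε) * ‖y‖) ^ (Fintype.card ι - 1) * B ≤ K := by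
  rw [norm_prod] at hF
  obtain ⟨i, hi⟩ := exists_le_rpow_of_prod_le hK hF
  have : 0 ≤ (1 - ε) * ‖y‖ := mul_nonneg (sub_nonneg.2 hε1) (norm_nonneg y)
  calc ((1 - ε) * ‖y‖) ^ (Fintype.card ι - 1) * B
      ≤ ((1 - ε) * ‖y‖) ^ (Fintype.card ι - 1) * ∏ j ∈ univ.erase i, |α j - α i| := by
        gcongr; exact hB i
    _ ≤ ∏ j ∈ univ.erase i, ‖x - α j * y‖ :=
        pow_mul_prod_erase_le_prod_erase_norm hε0 hε1 (hi.trans hy) fun j hj => hA i j hj.symm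
    _ ≤ ‖x - α i * y‖ * ∏ j ∈ univ.erase i, ‖x - α j * y‖ :=
        le_mul_of_one_le_left (prod_nonneg fun _ _ => norm_nonneg _) (hone i)
    _ = ∏ j, ‖x - α j * y‖ := mul_prod_erase _ (fun j => ‖x - α j * y‖) (mem_univ i)
    _ ≤ K := hF

end FactorBounds

theorem lt_pow_pred_of_rpow_one_div_sub_two_lt {C Y : ℝ} {n : ℕ} (hC : 1 ≤ C) (hn : 3 ≤ n)
    (h : C ^ ((1 : ℝ) / ((n : ℝ) - 2)) < Y) : C < Y ^ (n - 1) := by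
  have hn2 : ((n - 2 : ℕ) : ℝ) = (n : ℝ) - 2 := by rw [Nat.cast_sub (by omega)]; norm_num
  have hpos : (0 : ℝ) < n - 2 := by rw [← hn2]; exact_mod_cast (by omega : 0 < n - 2)
  have hY : 1 ≤ Y := (Real.one_le_rpow hC (one_div_pos.2 hpos).le).trans h.le
  rw [one_div, Real.rpow_inv_lt_iff_of_pos (by linarith) (by linarith) hpos, ← hn2,
    Real.rpow_natCast] at h
  exact h.trans_le (pow_le_pow_right₀ hY (by omega))

theorem norm_ofReal_mul_I_mul_ofReal (v : ℝ) {s : ℝ} (hs : 0 ≤ s) :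
    ‖(v : ℂ) * (Complex.I * s)‖ = |v| * s := by
  simp [abs_of_nonneg hs]

theorem stmt19_general (m : ℤ) (hm : 1 < m)
    (n : ℕ) (hn : 3 ≤ n) (α : Fin n → ℝ) (hα : Function.Injective α)
    (K ε A B C C₂ : ℝ) (hK : 1 ≤ K) (hε : 0 < ε) (hε1 : ε < 1)
    (hA : IsLeast {r : ℝ | ∃ i j : Fin n, i ≠ j ∧ r = |α i - α j|} A)
    (hB : IsLeast {r : ℝ | ∃ i : Fin n, r = ∏ j ∈ univ.erase i, |α j - α i|} B)
    (hC : C = max (K / ((1 - ε) ^ (n - 1) * B)) 1)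
    (hC₂ : C₂ = max (K ^ ((1 : ℝ) / n) / (ε * A)) (C ^ ((1 : ℝ) / ((n : ℝ) - 2))))
    (x₁ x₂ y₁ y₂ : ℤ) (x y : ℂ)
    (hx : x = (x₁ : ℂ) + (x₂ : ℂ) * (Complex.I * Real.sqrt m))
    (hy : y = (y₁ : ℂ) + (y₂ : ℂ) * (Complex.I * Real.sqrt m))
    (hF : ‖∏ j, (x - (α j : ℂ) * y)‖ ≤ K)
    (hylarge : C₂ < ‖y‖)
    (hy₁ : y₁ = 0) :
    x₁ = 0 ∧ |∏ j, ((x₂ : ℝ) - α j * y₂)| ≤ K / (Real.sqrt m) ^ n := by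
  have : Nonempty (Fin n) := ⟨⟨0, by omega⟩⟩
  have hApos : 0 < A := by
    obtain ⟨i, j, hij, rfl⟩ := hA.1
    exact abs_pos.2 (sub_ne_zero.2 (hα.ne hij))
  have hBpos : 0 < B := by
    obtain ⟨i, rfl⟩ := hB.1
    exact prod_pos fun j hj => abs_pos.2 (sub_ne_zero.2 (hα.ne (ne_of_mem_erase hj)))
  have hfactor : ∀ j,
      x - α j * y = ((x₁ : ℝ) : ℂ) + ((x₂ - α j * y₂ : ℝ) : ℂ) * (Complex.I * √m) := by
    intro j; rw [hx, hy, hy₁]; push_cast; ring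
  have hx₁ : x₁ = 0 := by
    by_contra hx₁
    have hone : ∀ j, 1 ≤ ‖x - α j * y‖ := fun j => calc
      (1 : ℝ) ≤ |(x₁ : ℝ)| := by exact_mod_cast Int.one_le_abs hx₁
      _ = |(x - α j * y).re| := by rw [hfactor j]; simp
      _ ≤ ‖x - α j * y‖ := Complex.abs_re_le_norm _
    have hsmall : K ^ ((1 : ℝ) / Fintype.card (Fin n)) ≤ ε * A * ‖y‖ := by
      rw [Fintype.card_fin, ← div_le_iff₀' (by positivity)]
      exact (hC₂ ▸ le_max_left _ _).trans hylarge.le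
    have hbound := pow_card_pred_mul_le_of_norm_prod_le (by linarith) hε.le hε1.le
      (fun i j hij => hA.2 ⟨i, j, hij, rfl⟩) (fun i => hB.2 ⟨i, rfl⟩) hF hsmall hone
    rw [Fintype.card_fin, mul_pow, mul_right_comm, ← le_div_iff₀' (by positivity)] at hbound
    exact (hbound.trans (hC ▸ le_max_left _ _)).not_gt
      (lt_pow_pred_of_rpow_one_div_sub_two_lt (hC ▸ le_max_right _ _) hn
        ((hC₂ ▸ le_max_right _ _).trans_lt hylarge))
  refine ⟨hx₁, ?_⟩
  have hnorm : ∀ j, ‖x - α j * y‖ = |x₂ - α j * y₂| * √m := by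
    intro j
    rw [hfactor j, hx₁, Int.cast_zero, Complex.ofReal_zero, zero_add]
    exact norm_ofReal_mul_I_mul_ofReal _ (Real.sqrt_nonneg _)
  rw [norm_prod, Fintype.prod_congr _ _ hnorm, prod_mul_distrib, prod_const, card_univ,
    Fintype.card_fin] at hF
  rw [abs_prod, le_div_iff₀ (by positivity)]
  exact hF

theorem stmt19 (m : ℤ) (hm : 1 < m) (hsf : Squarefree m)
    (hmod : m % 4 = 1 ∨ m % 4 = 2)
    (n : ℕ) (hn : 3 ≤ n) (α : Fin n → ℝ) (hα : Function.Injective α)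
    (hint : ∀ k : ℕ, ∃ z : ℤ,
      ((∏ j, (Polynomial.X - Polynomial.C (α j)) : Polynomial ℝ)).coeff k = z)
    (K ε A B C C₂ : ℝ) (hK : 1 ≤ K) (hε : 0 < ε) (hε1 : ε < 1)
    (hA : IsLeast {r : ℝ | ∃ i j : Fin n, i ≠ j ∧ r = |α i - α j|} A)
    (hB : IsLeast {r : ℝ | ∃ i : Fin n, r = ∏ j ∈ univ.erase i, |α j - α i|} B)
    (hC : C = max (K / ((1 - ε) ^ (n - 1) * B)) 1)
    (hC₂ : C₂ = max (K ^ ((1 : ℝ) / n) / (ε * A)) (C ^ ((1 : ℝ) / ((n : ℝ) - 2))))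
    (x₁ x₂ y₁ y₂ : ℤ) (x y : ℂ)
    (hx : x = (x₁ : ℂ) + (x₂ : ℂ) * (Complex.I * Real.sqrt m))
    (hy : y = (y₁ : ℂ) + (y₂ : ℂ) * (Complex.I * Real.sqrt m))
    (hF : ‖∏ j, (x - (α j : ℂ) * y)‖ ≤ K)
    (hylarge : C₂ < ‖y‖)
    (hy₁ : y₁ = 0) :
    x₁ = 0 ∧ |∏ j, ((x₂ : ℝ) - α j * y₂)| ≤ K / (Real.sqrt m) ^ n :=
  stmt19_general m hm n hn α hα K ε A B C C₂ hK hε hε1 hA hB hC hC₂ x₁ x₂ y₁ y₂ x y hx hy hF hylarge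
    hy₁
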